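/- Let c > 0 and for each n let λ_{i,n} = c·exp(i x_{i,n}) with x_{i,n} ∈ [−π, π], 1 ≤ i ≤ n. Suppose s_k = lim_{n→∞} (1/n) ∑_{i=1}^n λ_{i,n}^k exists for every k ∈ ℤ, and that ∑_{k∈ℤ} |s_k|/c^k < ∞. Define M(x) = ∑_{k∈ℤ} (s_k/c^k) e^{−ikx}. Then for every continuous F on [−π, π], lim_{n→∞} (1/n) ∑_{i=1}^n F(x_{i,n}) = (1/2π) ∫_{−π}^{π} F(x) M(x) dx. -/

import Mathlib

/-!
After division by `c ^ k`, the `k`-th power average of the `λ_{i,n}` is the empirical average of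
`e^{ikx}` over the points `x_{i,n}`, and by orthogonality `(1/2π) ∫ e^{ikt} M(t) dt = s_k / c^k`.
So the empirical averages converge to `(1/2π) ∫ F M` for every character `F = e^{ik·}`. On
`C(ℝ/2πℤ)` the empirical averages are contractions, hence equicontinuous, and the convergence
extends from the dense span of the characters to every continuous periodic function. A function
that is continuous on `[-π, π]` but takes different values at `±π` is cut as
`F = F (1 - ψ_δ) + F ψ_δ` with a continuous `0 ≤ ψ_δ ≤ 1` equal to `1` at `±π` and supported in
a `δ`-neighbourhood of the endpoints: the first part is periodic, and the second has mass
`O(δ)` both for the bounded limit density and, eventually, for the empirical measures.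
-/

open MeasureTheory Filter Complex Real
open scoped Topology

noncomputable section

theorem tendsto_apply_of_dense_span {ι 𝕜 E F : Type*} [NontriviallyNormedField 𝕜]
    [NormedAddCommGroup E] [NormedSpace 𝕜 E] [NormedAddCommGroup F] [NormedSpace 𝕜 F]
    {l : Filter ι} {u : ι → E →L[𝕜] F} {L : E →L[𝕜] F} (hu : ∃ C, ∀ i, ‖u i‖ ≤ C)
    {s : Set E} (hs : Dense (Submodule.span 𝕜 s : Set E))
    (h : ∀ e ∈ s, Tendsto (u · e) l (𝓝 (L e))) (e : E) :
    Tendsto (u · e) l (𝓝 (L e)) := by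
  let S : Submodule 𝕜 E :=
    { carrier := {e | Tendsto (u · e) l (𝓝 (L e))}
      zero_mem' := by simpa using tendsto_const_nhds
      add_mem' := fun ha hb => by simpa using ha.add hb
      smul_mem' := fun c _ ha => by simpa using ha.const_smul c }
  have hequi : Equicontinuous ((↑) ∘ u) := ((NormedSpace.equicontinuous_TFAE u).out 5 1).mp hu
  have hclosed : IsClosed (S : Set E) := hequi.isClosed_setOfPred_tendsto L.continuous
  exact hclosed.closure_subset_iff.mpr (Submodule.span_le.mpr h) (hs e)

lemma tendsto_of_forall_eventually_norm_sub_le {ι E : Type*} [SeminormedAddCommGroup E]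
    {l : Filter ι} {u : ι → E} {a : E} (A : ℝ) (h : ∀ δ > 0, ∀ᶠ i in l, ‖u i - a‖ ≤ A * δ) :
    Tendsto u l (𝓝 a) := by
  refine Metric.tendsto_nhds.mpr fun ε hε => ?_
  have hA : 0 < |A| + 1 := by positivity
  filter_upwards [h (ε / (|A| + 1)) (by positivity)] with i hi
  rw [dist_eq_norm]
  calc ‖u i - a‖ ≤ A * (ε / (|A| + 1)) := hi
    _ ≤ |A| * (ε / (|A| + 1)) := by gcongr; exact le_abs_self A
    _ < ε := by rw [← mul_div_assoc, div_lt_iff₀ hA]; linarith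

lemma norm_setIntegral_Icc_le_of_eqOn_Ioo_zero {E : Type*} [NormedAddCommGroup E]
    [NormedSpace ℝ E] {f : ℝ → E} {a b B δ : ℝ} (hB : 0 ≤ B) (hδ : 0 ≤ δ)
    (hf : ∀ t ∈ Set.Icc a b, ‖f t‖ ≤ B) (hf0 : ∀ t ∈ Set.Ioo (a + δ) (b - δ), f t = 0) :
    ‖∫ t in Set.Icc a b, f t‖ ≤ B * (2 * δ) := by
  set S := Set.Icc a b \ Set.Ioo (a + δ) (b - δ)
  have hS : S ⊆ Set.Icc a (a + δ) ∪ Set.Icc (b - δ) b := by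
    rintro t ⟨⟨hat, htb⟩, ht⟩
    by_cases h : t ≤ a + δ
    · exact Or.inl ⟨hat, h⟩
    · exact Or.inr ⟨le_of_not_gt fun h' => ht ⟨lt_of_not_ge h, h'⟩, htb⟩
  rw [setIntegral_eq_of_subset_of_forall_sdiff_eq_zero measurableSet_Icc Set.sdiff_subset
    fun t ⟨htI, htS⟩ => hf0 t (by_contra fun h => htS ⟨htI, h⟩)]
  calc ‖∫ t in S, f t‖
      ≤ B * volume.real S :=
        norm_setIntegral_le_of_norm_le_const
          ((measure_mono Set.sdiff_subset).trans_lt measure_Icc_lt_top) fun t ht => hf t ht.1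
    _ ≤ B * (volume.real (Set.Icc a (a + δ)) + volume.real (Set.Icc (b - δ) b)) := by
        gcongr
        exact (measureReal_mono hS
          (measure_union_lt_top measure_Icc_lt_top measure_Icc_lt_top).ne).trans
          (measureReal_union_le _ _)
    _ = B * (2 * δ) := by
        rw [Real.volume_real_Icc_of_le (by linarith), Real.volume_real_Icc_of_le (by linarith)]
        ring

lemma exists_continuousMap_addCircle_eqOn {B : Type*} [TopologicalSpace B] {p a : ℝ}
    [hp : Fact (0 < p)] {G : ℝ → B} (hG : ContinuousOn G (Set.Icc a (a + p)))
    (hGp : G a = G (a + p)) :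
    ∃ g : C(AddCircle p, B), ∀ t ∈ Set.Icc a (a + p), g t = G t := by
  refine ⟨⟨AddCircle.liftIco p a G, AddCircle.liftIco_continuous hGp hG⟩, fun t ht => ?_⟩
  rcases ht.2.lt_or_eq with h | rfl
  · exact AddCircle.liftIco_coe_apply ⟨ht.1, h⟩
  · have ha : a ∈ Set.Ico a (a + p) := ⟨le_rfl, by linarith [hp.out]⟩
    simp only [ContinuousMap.coe_mk, AddCircle.coe_add_period, AddCircle.liftIco_coe_apply ha, hGp]

lemma continuous_addCircle_comp_coe {p : ℝ} (f : C(AddCircle p, ℂ)) :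
    Continuous fun t : ℝ => f t :=
  f.continuous.comp (AddCircle.continuous_mk' p)

instance fact_two_pi_pos : Fact (0 < 2 * π) := ⟨two_pi_pos⟩

lemma fourier_two_pi_coe_apply (k : ℤ) (t : ℝ) :
    fourier k (t : AddCircle (2 * π)) = exp (I * k * t) := by
  rw [fourier_coe_apply]
  congr 1
  field_simp
  push_cast
  ring

lemma norm_exp_I_mul_intCast_mul_ofReal (k : ℤ) (t : ℝ) : ‖exp (I * k * t)‖ = 1 := by
  simp [Complex.norm_exp]

lemma norm_exp_neg_I_mul_intCast_mul_ofReal (k : ℤ) (t : ℝ) : ‖exp (-I * k * t)‖ = 1 := by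
  simp [Complex.norm_exp]

lemma integral_exp_int_mul_I (m : ℤ) :
    ∫ t in Set.Icc (-π) π, exp (I * m * t) = if m = 0 then 2 * (π : ℂ) else 0 := by
  rw [integral_Icc_eq_integral_Ioc, ← intervalIntegral.integral_of_le (by linarith [pi_pos])]
  split_ifs with hm
  · simp [hm]
    ring
  · have hm' : I * m ≠ 0 := mul_ne_zero I_ne_zero (Int.cast_ne_zero.mpr hm)
    have hperiod : exp (I * m * π) = exp (I * m * (-π : ℝ)) := by
      rw [show I * m * π = I * m * (-π : ℝ) + m * (2 * π * I) by push_cast; ring,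
        Complex.exp_add, exp_int_mul_two_pi_mul_I, mul_one]
    rw [integral_exp_mul_complex hm', hperiod, sub_self, zero_div]

def trigSeries (a : ℤ → ℂ) (t : ℝ) : ℂ :=
  ∑' k : ℤ, a k * exp (-I * k * t)

section trigSeries

variable {a : ℤ → ℂ}

lemma norm_trigSeries_term (a : ℤ → ℂ) (k : ℤ) (t : ℝ) :
    ‖a k * exp (-I * k * t)‖ = ‖a k‖ := by
  rw [norm_mul, norm_exp_neg_I_mul_intCast_mul_ofReal, mul_one]

lemma continuous_trigSeries (ha : Summable (‖a ·‖)) : Continuous (trigSeries a) :=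
  continuous_tsum (fun k => by fun_prop) ha fun k t => (norm_trigSeries_term a k t).le

lemma integral_exp_mul_trigSeries (ha : Summable (‖a ·‖)) (k : ℤ) :
    ∫ t in Set.Icc (-π) π, exp (I * k * t) * trigSeries a t = 2 * π * a k := by
  have hterm : ∀ j : ℤ, ∀ t : ℝ, exp (I * k * t) * (a j * exp (-I * j * t)) =
      a j * exp (I * (k - j : ℤ) * t) := fun j t => by
    rw [mul_left_comm, ← Complex.exp_add]; push_cast; ring_nf
  have hint : ∀ j : ℤ, Integrable (fun t : ℝ => a j * exp (I * (k - j : ℤ) * t))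
      (volume.restrict (Set.Icc (-π) π)) := fun j =>
    (continuous_const.mul (by fun_prop)).integrableOn_Icc
  have hsum : Summable fun j : ℤ =>
      ∫ t in Set.Icc (-π) π, ‖a j * exp (I * (k - j : ℤ) * t)‖ := by
    simp only [norm_mul, norm_exp_I_mul_intCast_mul_ofReal, mul_one, integral_const,
      smul_eq_mul]
    exact ha.mul_left _
  simp only [trigSeries, ← tsum_mul_left, hterm]
  rw [← integral_tsum_of_summable_integral_norm hint hsum]
  simp only [integral_const_mul, integral_exp_int_mul_I, sub_eq_zero]
  rw [tsum_eq_single k fun j hj => by rw [if_neg (Ne.symm hj), mul_zero], if_pos rfl]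
  ring

end trigSeries

def empiricalMean (x : ℕ → ℕ → ℝ) (n : ℕ) (f : ℝ → ℂ) : ℂ :=
  (1 / (n : ℂ)) * ∑ i ∈ Finset.range n, f (x n i)

def densityMean (M : ℝ → ℂ) (f : ℝ → ℂ) : ℂ :=
  (1 / (2 * (π : ℂ))) * ∫ t in Set.Icc (-π) π, f t * M t

section means

variable {x : ℕ → ℕ → ℝ} {M : ℝ → ℂ}

lemma empiricalMean_congr (hx : ∀ n : ℕ, ∀ i < n, x n i ∈ Set.Icc (-π) π) {f g : ℝ → ℂ}
    (hfg : Set.EqOn f g (Set.Icc (-π) π)) (n : ℕ) :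
    empiricalMean x n f = empiricalMean x n g := by
  simp only [empiricalMean]
  congr 1
  exact Finset.sum_congr rfl fun i hi => hfg (hx n i (Finset.mem_range.mp hi))

lemma norm_empiricalMean_mul_le (hx : ∀ n : ℕ, ∀ i < n, x n i ∈ Set.Icc (-π) π) {F : ℝ → ℂ}
    {B : ℝ} (hF : ∀ t ∈ Set.Icc (-π) π, ‖F t‖ ≤ B) {ψ : ℝ → ℝ} (hψ : ∀ t, 0 ≤ ψ t) (n : ℕ) :
    ‖empiricalMean x n (fun t => F t * ψ t)‖ ≤ B * ‖empiricalMean x n (fun t => ψ t)‖ := by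
  have hmean : empiricalMean x n (fun t => ψ t) =
      ((1 / n * ∑ i ∈ Finset.range n, ψ (x n i) : ℝ) : ℂ) := by
    simp [empiricalMean]
  have hsum : 0 ≤ ∑ i ∈ Finset.range n, ψ (x n i) := Finset.sum_nonneg fun i _ => hψ _
  rw [hmean, Complex.norm_real, Real.norm_of_nonneg (by positivity), empiricalMean, norm_mul]
  calc ‖1 / (n : ℂ)‖ * ‖∑ i ∈ Finset.range n, F (x n i) * ψ (x n i)‖
      ≤ 1 / n * ∑ i ∈ Finset.range n, B * ψ (x n i) := by
        rw [show ‖1 / (n : ℂ)‖ = 1 / n by simp]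
        gcongr
        refine (norm_sum_le _ _).trans (Finset.sum_le_sum fun i hi => ?_)
        rw [norm_mul, Complex.norm_real, Real.norm_of_nonneg (hψ _)]
        exact mul_le_mul_of_nonneg_right (hF _ (hx n i (Finset.mem_range.mp hi))) (hψ _)
    _ = B * (1 / n * ∑ i ∈ Finset.range n, ψ (x n i)) := by rw [← Finset.mul_sum]; ring

lemma empiricalMean_add (n : ℕ) (f g : ℝ → ℂ) :
    empiricalMean x n (fun t => f t + g t) = empiricalMean x n f + empiricalMean x n g := by
  simp only [empiricalMean, Finset.sum_add_distrib, mul_add]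

lemma densityMean_congr {f g : ℝ → ℂ} (hfg : Set.EqOn f g (Set.Icc (-π) π)) :
    densityMean M f = densityMean M g := by
  simp only [densityMean]
  congr 1
  exact setIntegral_congr_fun measurableSet_Icc fun t ht => by rw [hfg ht]

lemma densityMean_add {f g : ℝ → ℂ} (hM : IntegrableOn M (Set.Icc (-π) π))
    (hf : ContinuousOn f (Set.Icc (-π) π)) (hg : ContinuousOn g (Set.Icc (-π) π)) :
    densityMean M (fun t => f t + g t) = densityMean M f + densityMean M g := by
  simp only [densityMean, add_mul]
  rw [integral_add (hM.continuousOn_mul hf isCompact_Icc) (hM.continuousOn_mul hg isCompact_Icc),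
    mul_add]

lemma densityMean_const_mul (c : ℂ) (f : ℝ → ℂ) :
    densityMean M (fun t => c * f t) = c * densityMean M f := by
  simp only [densityMean, mul_assoc, integral_const_mul]
  ring

lemma norm_densityMean_le {f : ℝ → ℂ} {B : ℝ} (hM : IntegrableOn M (Set.Icc (-π) π))
    (hf : ∀ t ∈ Set.Icc (-π) π, ‖f t‖ ≤ B) :
    ‖densityMean M f‖ ≤ 1 / (2 * π) * ((∫ t in Set.Icc (-π) π, ‖M t‖) * B) := by
  rw [densityMean, norm_mul, ← integral_mul_const]
  gcongr
  · exact le_of_eq (by simp [abs_of_pos pi_pos])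
  refine norm_integral_le_of_norm_le (Integrable.mul_const (Integrable.norm hM) B) ?_
  filter_upwards [ae_restrict_mem measurableSet_Icc] with t ht
  rw [norm_mul, mul_comm]
  gcongr
  exact hf t ht

lemma norm_densityMean_le_of_eqOn_Ioo_zero {f : ℝ → ℂ} {B K δ : ℝ} (hB : 0 ≤ B) (hK : 0 ≤ K)
    (hδ : 0 ≤ δ) (hf : ∀ t ∈ Set.Icc (-π) π, ‖f t‖ ≤ B) (hM : ∀ t ∈ Set.Icc (-π) π, ‖M t‖ ≤ K)
    (hf0 : ∀ t ∈ Set.Ioo (-π + δ) (π - δ), f t = 0) :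
    ‖densityMean M f‖ ≤ B * K * δ / π := by
  have hfM : ∀ t ∈ Set.Icc (-π) π, ‖f t * M t‖ ≤ B * K := fun t ht => by
    rw [norm_mul]
    exact mul_le_mul (hf t ht) (hM t ht) (norm_nonneg _) hB
  have hint := norm_setIntegral_Icc_le_of_eqOn_Ioo_zero (mul_nonneg hB hK) hδ hfM
    fun t ht => by rw [hf0 t ht, zero_mul]
  rw [densityMean, norm_mul]
  calc ‖1 / (2 * (π : ℂ))‖ * ‖∫ t in Set.Icc (-π) π, f t * M t‖
      ≤ 1 / (2 * π) * (B * K * (2 * δ)) := by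
        gcongr
        exact le_of_eq (by simp [abs_of_pos pi_pos])
    _ = B * K * δ / π := by field_simp

variable (x) in
def empiricalMeanCLM (n : ℕ) : C(AddCircle (2 * π), ℂ) →L[ℂ] ℂ :=
  (1 / (n : ℂ)) • ∑ i ∈ Finset.range n, ContinuousMap.evalCLM ℂ (x n i : AddCircle (2 * π))

lemma empiricalMeanCLM_apply (n : ℕ) (f : C(AddCircle (2 * π), ℂ)) :
    empiricalMeanCLM x n f = empiricalMean x n (fun t => f t) := by
  simp [empiricalMeanCLM, empiricalMean]

lemma norm_empiricalMeanCLM_le (n : ℕ) : ‖empiricalMeanCLM x n‖ ≤ 1 := by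
  refine ContinuousLinearMap.opNorm_le_bound _ zero_le_one fun f => ?_
  rw [empiricalMeanCLM_apply, empiricalMean, norm_mul, one_mul]
  rcases n.eq_zero_or_pos with rfl | hn
  · simp
  calc ‖1 / (n : ℂ)‖ * ‖∑ i ∈ Finset.range n, f (x n i)‖
      ≤ ‖1 / (n : ℂ)‖ * ∑ _i ∈ Finset.range n, ‖f‖ := by
        gcongr
        exact norm_sum_le_of_le _ fun i _ => f.norm_coe_le_norm _
    _ = ‖f‖ := by simp [hn.ne']

def densityMeanCLM (hM : IntegrableOn M (Set.Icc (-π) π)) : C(AddCircle (2 * π), ℂ) →L[ℂ] ℂ :=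
  LinearMap.mkContinuous
    { toFun := fun f => densityMean M (fun t => f t)
      map_add' := fun f g => densityMean_add hM (continuous_addCircle_comp_coe f).continuousOn
        (continuous_addCircle_comp_coe g).continuousOn
      map_smul' := fun c f => densityMean_const_mul c _ }
    (1 / (2 * π) * ∫ t in Set.Icc (-π) π, ‖M t‖) fun f => by
      rw [mul_assoc]
      exact norm_densityMean_le hM fun t _ => f.norm_coe_le_norm t

lemma densityMeanCLM_apply (hM : IntegrableOn M (Set.Icc (-π) π))
    (f : C(AddCircle (2 * π), ℂ)) :
    densityMeanCLM hM f = densityMean M (fun t => f t) := rfl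

theorem tendsto_empiricalMean_addCircle (hM : IntegrableOn M (Set.Icc (-π) π))
    (h : ∀ k : ℤ, Tendsto (fun n => empiricalMean x n (fun t => exp (I * k * t))) atTop
      (𝓝 (densityMean M (fun t => exp (I * k * t)))))
    (f : C(AddCircle (2 * π), ℂ)) :
    Tendsto (fun n => empiricalMean x n (fun t => f t)) atTop
      (𝓝 (densityMean M (fun t => f t))) := by
  simp only [← empiricalMeanCLM_apply, ← densityMeanCLM_apply hM]
  refine tendsto_apply_of_dense_span ⟨1, norm_empiricalMeanCLM_le⟩
    (Submodule.dense_iff_topologicalClosure_eq_top.mpr span_fourier_closure_eq_top) ?_ f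
  rintro _ ⟨k, rfl⟩
  simpa only [empiricalMeanCLM_apply, densityMeanCLM_apply, fourier_two_pi_coe_apply] using h k

lemma tendsto_empiricalMean_of_endpoints_eq (hx : ∀ n : ℕ, ∀ i < n, x n i ∈ Set.Icc (-π) π)
    (hper : ∀ f : C(AddCircle (2 * π), ℂ), Tendsto (fun n => empiricalMean x n (fun t => f t))
      atTop (𝓝 (densityMean M (fun t => f t))))
    {G : ℝ → ℂ} (hG : ContinuousOn G (Set.Icc (-π) π)) (hGπ : G (-π) = G π) :
    Tendsto (fun n => empiricalMean x n G) atTop (𝓝 (densityMean M G)) := by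
  have hπ : -π + 2 * π = π := by ring
  obtain ⟨g, hg⟩ := exists_continuousMap_addCircle_eqOn (p := 2 * π) (G := G) (by rwa [hπ])
    (by rwa [hπ])
  rw [hπ] at hg
  simpa only [empiricalMean_congr hx hg, densityMean_congr hg] using hper g

end means

def seamBump (δ t : ℝ) : ℝ := max 0 (1 - (π - |t|) / δ)

section seamBump

variable {δ : ℝ}

lemma continuous_seamBump (δ : ℝ) : Continuous (seamBump δ) :=
  continuous_const.max (continuous_const.sub ((continuous_const.sub continuous_abs).div_const δ))

lemma seamBump_nonneg (δ t : ℝ) : 0 ≤ seamBump δ t := le_max_left _ _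

lemma seamBump_le_one (hδ : 0 < δ) {t : ℝ} (ht : t ∈ Set.Icc (-π) π) : seamBump δ t ≤ 1 :=
  max_le zero_le_one (sub_le_self _ (div_nonneg (by linarith [abs_le.mpr ht]) hδ.le))

lemma norm_ofReal_seamBump_le_one (hδ : 0 < δ) {t : ℝ} (ht : t ∈ Set.Icc (-π) π) :
    ‖(seamBump δ t : ℂ)‖ ≤ 1 := by
  rw [Complex.norm_real, Real.norm_of_nonneg (seamBump_nonneg δ t)]
  exact seamBump_le_one hδ ht

lemma seamBump_neg_pi (δ : ℝ) : seamBump δ (-π) = 1 := by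
  simp [seamBump, abs_of_pos pi_pos]

lemma seamBump_pi (δ : ℝ) : seamBump δ π = 1 := by
  simp [seamBump, abs_of_pos pi_pos]

lemma seamBump_eq_zero (hδ : 0 < δ) {t : ℝ} (ht : t ∈ Set.Ioo (-π + δ) (π - δ)) :
    seamBump δ t = 0 := by
  have ht' : |t| < π - δ := abs_lt.mpr ⟨by linarith [ht.1], ht.2⟩
  refine max_eq_left (sub_nonpos.mpr ?_)
  rw [le_div_iff₀ hδ]
  linarith

end seamBump

lemma eventually_norm_empiricalMean_mul_seamBump_le {x : ℕ → ℕ → ℝ} {M F : ℝ → ℂ} {B K δ : ℝ}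
    (hx : ∀ n : ℕ, ∀ i < n, x n i ∈ Set.Icc (-π) π)
    (hper : ∀ f : C(AddCircle (2 * π), ℂ), Tendsto (fun n => empiricalMean x n (fun t => f t))
      atTop (𝓝 (densityMean M (fun t => f t))))
    (hB : 0 ≤ B) (hF : ∀ t ∈ Set.Icc (-π) π, ‖F t‖ ≤ B)
    (hK : 0 ≤ K) (hM : ∀ t ∈ Set.Icc (-π) π, ‖M t‖ ≤ K) (hδ : 0 < δ) :
    ∀ᶠ n in atTop, ‖empiricalMean x n (fun t => F t * seamBump δ t)‖ ≤ B * (K * δ / π + δ) := by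
  have hlim := tendsto_empiricalMean_of_endpoints_eq (G := fun t => (seamBump δ t : ℂ)) hx hper
    (continuous_ofReal.comp (continuous_seamBump δ)).continuousOn
    (by simp [seamBump_neg_pi, seamBump_pi])
  have hdens : ‖densityMean M (fun t => seamBump δ t)‖ ≤ K * δ / π := by
    simpa using norm_densityMean_le_of_eqOn_Ioo_zero zero_le_one hK hδ.le
      (fun t ht => norm_ofReal_seamBump_le_one hδ ht) hM
      (fun t ht => by simp [seamBump_eq_zero hδ ht])
  filter_upwards [Metric.tendsto_nhds.mp hlim δ hδ] with n hn
  refine (norm_empiricalMean_mul_le hx hF (seamBump_nonneg δ) n).trans ?_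
  gcongr
  rw [dist_eq_norm] at hn
  linarith [norm_le_norm_add_norm_sub' (empiricalMean x n (fun t => seamBump δ t))
    (densityMean M (fun t => seamBump δ t))]

theorem tendsto_empiricalMean_of_continuousOn {x : ℕ → ℕ → ℝ} {M : ℝ → ℂ}
    (hx : ∀ n : ℕ, ∀ i < n, x n i ∈ Set.Icc (-π) π) (hM : ContinuousOn M (Set.Icc (-π) π))
    (hper : ∀ f : C(AddCircle (2 * π), ℂ), Tendsto (fun n => empiricalMean x n (fun t => f t))
      atTop (𝓝 (densityMean M (fun t => f t))))
    {F : ℝ → ℂ} (hF : ContinuousOn F (Set.Icc (-π) π)) :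
    Tendsto (fun n => empiricalMean x n F) atTop (𝓝 (densityMean M F)) := by
  obtain ⟨B, hB⟩ := isCompact_Icc.exists_bound_of_continuousOn hF
  obtain ⟨K, hK⟩ := isCompact_Icc.exists_bound_of_continuousOn hM
  have h0 : (0 : ℝ) ∈ Set.Icc (-π) π := ⟨by linarith [pi_pos], pi_pos.le⟩
  have hB0 : 0 ≤ B := (norm_nonneg _).trans (hB 0 h0)
  have hK0 : 0 ≤ K := (norm_nonneg _).trans (hK 0 h0)
  refine tendsto_of_forall_eventually_norm_sub_le (1 + B * (2 * K / π + 1)) fun δ hδ => ?_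
  set ψ : ℝ → ℂ := fun t => seamBump δ t
  have hψ : Continuous ψ := continuous_ofReal.comp (continuous_seamBump δ)
  have hGc : ContinuousOn (fun t => F t * (1 - ψ t)) (Set.Icc (-π) π) :=
    hF.mul (continuous_const.sub hψ).continuousOn
  have hG : Tendsto (fun n => empiricalMean x n (fun t => F t * (1 - ψ t))) atTop
      (𝓝 (densityMean M (fun t => F t * (1 - ψ t)))) :=
    tendsto_empiricalMean_of_endpoints_eq hx hper hGc (by simp [ψ, seamBump_neg_pi, seamBump_pi])
  have hdens : ‖densityMean M (fun t => F t * ψ t)‖ ≤ B * K * δ / π :=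
    norm_densityMean_le_of_eqOn_Ioo_zero hB0 hK0 hδ.le
      (fun t ht => by
        simpa [ψ] using
          mul_le_mul (hB t ht) (norm_ofReal_seamBump_le_one hδ ht) (norm_nonneg _) hB0)
      hK fun t ht => by simp [ψ, seamBump_eq_zero hδ ht]
  have hsplit : F = fun t => F t * (1 - ψ t) + F t * ψ t := funext fun t => by ring
  filter_upwards [Metric.tendsto_nhds.mp hG δ hδ,
    eventually_norm_empiricalMean_mul_seamBump_le hx hper hB0 hB hK0 hK hδ] with n hGn hemp
  rw [dist_eq_norm] at hGn
  rw [hsplit, empiricalMean_add,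
    densityMean_add (g := fun t => F t * ψ t) hM.integrableOn_Icc hGc (hF.mul hψ.continuousOn),
    add_sub_add_comm]
  calc _ ≤ ‖empiricalMean x n (fun t => F t * (1 - ψ t)) -
          densityMean M (fun t => F t * (1 - ψ t))‖ +
          (‖empiricalMean x n (fun t => F t * ψ t)‖ + ‖densityMean M (fun t => F t * ψ t)‖) :=
        (norm_add_le _ _).trans (add_le_add le_rfl (norm_sub_le _ _))
    _ ≤ δ + (B * (K * δ / π + δ) + B * K * δ / π) := by gcongr
    _ = (1 + B * (2 * K / π + 1)) * δ := by ring

end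

lemma densityMean_trigSeries_exp {a : ℤ → ℂ} (ha : Summable (‖a ·‖)) (k : ℤ) :
    densityMean (trigSeries a) (fun t => exp (I * k * t)) = a k := by
  rw [densityMean, integral_exp_mul_trigSeries ha]
  field_simp

lemma tendsto_empiricalMean_exp_of_tendsto_powerMean {c : ℝ} (hc : c ≠ 0) {x : ℕ → ℕ → ℝ}
    {lam : ℕ → ℕ → ℂ} (hlam : ∀ n i, lam n i = c * exp (I * x n i)) {k : ℤ} {s : ℂ}
    (hs : Tendsto (fun n : ℕ => (1 / (n : ℂ)) * ∑ i ∈ Finset.range n, lam n i ^ k) atTop (𝓝 s)) :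
    Tendsto (fun n => empiricalMean x n (fun t => exp (I * k * t))) atTop (𝓝 (s / c ^ k)) := by
  have hpow : ∀ n i, exp (I * k * x n i) = ((c : ℂ) ^ k)⁻¹ * lam n i ^ k := fun n i => by
    rw [hlam, mul_zpow, ← Complex.exp_int_mul,
      inv_mul_cancel_left₀ (zpow_ne_zero k (by exact_mod_cast hc))]
    ring_nf
  simp only [empiricalMean, hpow, ← Finset.mul_sum, div_eq_inv_mul s]
  convert hs.const_mul ((c : ℂ) ^ k)⁻¹ using 2
  ring

/-- If complex numbers `λ_{i,n} = c e^{i x_{i,n}}` of fixed modulus `c` have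
convergent power averages `s_k` for all `k ∈ ℤ`, absolutely summable after
rescaling, then the arguments `x_{i,n}` distribute according to the continuous
density `M(x) = ∑_k (s_k/c^k) e^{-ikx}`. -/
theorem ergodic_formula_absolutely_continuous (c : ℝ) (hc : 0 < c)
    (x : ℕ → ℕ → ℝ) (hx : ∀ n : ℕ, ∀ i < n, x n i ∈ Set.Icc (-π) π)
    (lam : ℕ → ℕ → ℂ)
    (hlam : ∀ n i, lam n i = (c : ℂ) * Complex.exp (Complex.I * (x n i : ℂ)))
    (s : ℤ → ℂ)
    (hs : ∀ k : ℤ, Tendsto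
      (fun n : ℕ => (1 / (n : ℂ)) * ∑ i ∈ Finset.range n, lam n i ^ k)
      atTop (nhds (s k)))
    (hsum : Summable (fun k : ℤ => ‖s k‖ / c ^ k))
    (Mden : ℝ → ℂ)
    (hM : ∀ t : ℝ, Mden t = ∑' k : ℤ,
      (s k / (c : ℂ) ^ k) * Complex.exp (-Complex.I * (k : ℂ) * (t : ℂ))) :
    ∀ F : ℝ → ℂ, ContinuousOn F (Set.Icc (-π) π) →
      Tendsto (fun n : ℕ => (1 / (n : ℂ)) * ∑ i ∈ Finset.range n, F (x n i))
        atTop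
        (nhds ((1 / (2 * (π : ℂ))) * ∫ t in Set.Icc (-π) π, F t * Mden t)) := by
  intro F hF
  set a : ℤ → ℂ := fun k => s k / (c : ℂ) ^ k
  have ha : Summable (‖a ·‖) := by
    simpa only [a, norm_div, norm_zpow, Complex.norm_real, Real.norm_of_nonneg hc.le] using hsum
  obtain rfl : Mden = trigSeries a := funext hM
  have hM_cont := continuous_trigSeries ha
  refine tendsto_empiricalMean_of_continuousOn hx hM_cont.continuousOn
    (tendsto_empiricalMean_addCircle hM_cont.integrableOn_Icc fun k => ?_) hF
  rw [densityMean_trigSeries_exp ha]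
  exact tendsto_empiricalMean_exp_of_tendsto_powerMean hc.ne' hlam (hs k)
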